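/- arXiv:1802.07083 — 9 statements merged into one kernel-verified Lean document; each statement's English description precedes it below -/
import Mathlib

section
/- Let σ₁ and σ₂ be polyhedral cones in ℝⁿ whose intersection σ₁ ∩ σ₂ is full dimensional, and let γ₁, γ₂ ∈ ℝⁿ. Then there exists γ ∈ ℝⁿ such that (γ₁ + σ₁) ∩ (γ₂ + σ₂) ⊆ γ + (σ₁ ∩ σ₂). -/
open Matrix

/-- The polyhedral cone generated by vectors `u 0, …, u (k-1)` in `ℝⁿ`. -/
def polyCone {n k : ℕ} (u : Fin k → (Fin n → ℝ)) : Set (Fin n → ℝ) :=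
  {x | ∃ lam : Fin k → ℝ, (∀ i, 0 ≤ lam i) ∧ x = ∑ i, lam i • u i}

open Pointwise

namespace PointedCone

variable {R E : Type*} [Ring R] [LinearOrder R] [IsOrderedRing R] [AddCommGroup E] [Module R E]

/-- `C ⊔ -C` is closed under negation, so it is its own lineality space; hence it is a
submodule and contains the span of `C`. -/
lemma mem_sub_of_mem_span {C : PointedCone R E} {x : E}
    (hx : x ∈ Submodule.span R (C : Set E)) : x ∈ (C : Set E) - (C : Set E) := by
  have hspan : Submodule.span R (C : Set E) ≤ (C ⊔ -C).lineal :=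
    Submodule.span_le.2 fun y hy =>
      ⟨Submodule.mem_sup_left hy, Submodule.mem_sup_right (by simpa using hy)⟩
  obtain ⟨a, ha, b, hb, rfl⟩ := Submodule.mem_sup.1 (hspan hx).1
  exact ⟨a, ha, -b, hb, sub_neg_eq_add a b⟩

/-- Writing `γ₁ - γ₂ = a - b` with `a, b ∈ C₁ ∩ C₂`, the common translate is `γ₁ - a = γ₂ - b`. -/
theorem exists_inter_translates_subset_translate (C₁ C₂ : PointedCone R E) {γ₁ γ₂ : E}
    (h : γ₁ - γ₂ ∈ Submodule.span R ((C₁ : Set E) ∩ C₂)) :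
    ∃ γ : E, ((γ₁ + ·) '' C₁) ∩ ((γ₂ + ·) '' C₂) ⊆ (γ + ·) '' ((C₁ : Set E) ∩ C₂) := by
  obtain ⟨a, ha, b, hb, hab⟩ := mem_sub_of_mem_span (C := C₁ ⊓ C₂) h
  refine ⟨γ₁ - a, ?_⟩
  rintro _ ⟨⟨p, hp, rfl⟩, q, hq, hqp⟩
  have hpq : p + a = q + b := by
    linear_combination (norm := module) hab - hqp
  exact ⟨p + a, ⟨C₁.add_mem hp ha.1, hpq ▸ C₂.add_mem hq hb.2⟩, sub_add_add_cancel γ₁ p a⟩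

end PointedCone

lemma polyCone_eq_hull {n k : ℕ} (u : Fin k → (Fin n → ℝ)) :
    polyCone u = PointedCone.hull ℝ (Set.range u) := by
  ext x
  simp only [polyCone, Set.mem_ofPred_eq, SetLike.mem_coe,
    Submodule.mem_span_range_iff_exists_fun]
  constructor
  · rintro ⟨lam, hlam, rfl⟩
    exact ⟨fun i => ⟨lam i, hlam i⟩, by simp [Nonneg.mk_smul]⟩
  · rintro ⟨c, rfl⟩
    exact ⟨fun i => c i, fun i => (c i).2, by simp [Nonneg.coe_smul]⟩

/-- If `σ₁ ∩ σ₂` is full dimensional then the intersection of translates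
`(γ₁ + σ₁) ∩ (γ₂ + σ₂)` is contained in a translate of `σ₁ ∩ σ₂`. -/
theorem inter_translates_subset_translate {n k₁ k₂ : ℕ}
    (u₁ : Fin k₁ → (Fin n → ℝ)) (u₂ : Fin k₂ → (Fin n → ℝ))
    (hfull : Submodule.span ℝ (polyCone u₁ ∩ polyCone u₂) = ⊤) (γ₁ γ₂ : Fin n → ℝ) :
    ∃ γ : Fin n → ℝ,
      ((γ₁ + ·) '' polyCone u₁) ∩ ((γ₂ + ·) '' polyCone u₂) ⊆
        (γ + ·) '' (polyCone u₁ ∩ polyCone u₂) := by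
  simp only [polyCone_eq_hull] at hfull ⊢
  exact PointedCone.exists_inter_translates_subset_translate _ _ (hfull ▸ Submodule.mem_top)
end

section
/- Let ⪯ be a positive total order on ℝⁿ compatible with the group structure (so the first orthant is ⪯-nonnegative), let σ₁, σ₂ be ⪯-nonnegative rational polyhedral cones, and let γ₁, γ₂ ∈ ℝⁿ. Then there exist γ₃ ∈ ℝⁿ and a ⪯-nonnegative rational polyhedral cone σ₃ such that (γ₁ + σ₁) ∪ (γ₂ + σ₂) ⊆ γ₃ + σ₃. -/
open Matrix

/-- Real vectors obtained from integer generating vectors (rational cones). -/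
def ratGen {n k : ℕ} (v : Fin k → Fin n → ℤ) : Fin k → Fin n → ℝ :=
  fun i j => (v i j : ℝ)

/-! The cone we build is `σ₁ + σ₂ + ℝ≥0ⁿ`, translated by the coordinatewise minimum
`γ₁ ⊓ γ₂`: it is `⪯`-nonnegative because `⪯`-nonnegative vectors are closed under addition,
and it contains `γᵢ + σᵢ` because `γᵢ - γ₁ ⊓ γ₂` lies in the first orthant. -/

open Pointwise

section Cones

variable {n k₁ k₂ : ℕ}

lemma zero_mem_polyCone {k : ℕ} (u : Fin k → Fin n → ℝ) : 0 ∈ polyCone u :=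
  ⟨0, fun _ => le_rfl, by simp⟩

lemma polyCone_append (u : Fin k₁ → Fin n → ℝ) (w : Fin k₂ → Fin n → ℝ) :
    polyCone (Fin.append u w) = polyCone u + polyCone w := by
  ext x
  simp only [Set.mem_add, polyCone, Set.mem_ofPred_eq, Fin.sum_univ_add, Fin.append_left,
    Fin.append_right]
  constructor
  · rintro ⟨lam, hlam, rfl⟩
    exact ⟨_, ⟨_, fun i => hlam (Fin.castAdd k₂ i), rfl⟩,
      _, ⟨_, fun i => hlam (Fin.natAdd k₁ i), rfl⟩, rfl⟩
  · rintro ⟨_, ⟨lam₁, hlam₁, rfl⟩, _, ⟨lam₂, hlam₂, rfl⟩, rfl⟩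
    refine ⟨Fin.append lam₁ lam₂, Fin.addCases ?_ ?_, ?_⟩ <;> simp [hlam₁, hlam₂]

lemma ratGen_append (v : Fin k₁ → Fin n → ℤ) (w : Fin k₂ → Fin n → ℤ) :
    ratGen (Fin.append v w) = Fin.append (ratGen v) (ratGen w) := by
  funext i j
  refine Fin.addCases (fun i => ?_) (fun i => ?_) i <;> simp [ratGen]

def stdGen (n : ℕ) : Fin n → Fin n → ℤ := fun i => Pi.single i 1

lemma polyCone_ratGen_stdGen : polyCone (ratGen (stdGen n)) = {x | 0 ≤ x} := by
  have hgen : ratGen (stdGen n) = fun i => Pi.single i 1 := by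
    funext i j
    by_cases h : j = i <;> simp [ratGen, stdGen, h]
  ext x
  rw [hgen]
  constructor
  · rintro ⟨lam, hlam, rfl⟩ j
    simpa [Finset.sum_apply, Pi.single_apply] using hlam j
  · exact fun hx => ⟨x, hx, pi_eq_sum_univ' x⟩

end Cones

lemma nonneg_add_of_translation_invariant {α : Type*} [AddCommMonoid α] {r : α → α → Prop}
    (htrans : ∀ a b c, r a b → r b c → r a c) (hadd : ∀ a b c, r a b → r (a + c) (b + c))
    {a b : α} (ha : r 0 a) (hb : r 0 b) : r 0 (a + b) := by
  have hab : r a (a + b) := by simpa [add_comm b] using hadd 0 b a hb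
  exact htrans _ _ _ ha hab

lemma union_image_add_subset_image_add {α : Type*} [AddCommGroup α] {S T O : Set α}
    {γ γ₁ γ₂ : α} (hS : 0 ∈ S) (hT : 0 ∈ T) (h₁ : γ₁ - γ ∈ O) (h₂ : γ₂ - γ ∈ O) :
    (γ₁ + ·) '' S ∪ (γ₂ + ·) '' T ⊆ (γ + ·) '' (S + T + O) := by
  rintro _ (⟨s, hs, rfl⟩ | ⟨t, ht, rfl⟩)
  · exact ⟨s + 0 + (γ₁ - γ), Set.add_mem_add (Set.add_mem_add hs hT) h₁, by dsimp only; abel⟩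
  · exact ⟨0 + t + (γ₂ - γ), Set.add_mem_add (Set.add_mem_add hS ht) h₂, by dsimp only; abel⟩

theorem union_translated_nonneg_cones_general {n : ℕ}
    (r : (Fin n → ℝ) → (Fin n → ℝ) → Prop)
    (htrans : ∀ a b c, r a b → r b c → r a c)
    (hadd : ∀ a b c, r a b → r (a + c) (b + c))
    (hpos : ∀ x : Fin n → ℝ, (∀ i, 0 ≤ x i) → r 0 x)
    {k₁ k₂ : ℕ} (v₁ : Fin k₁ → Fin n → ℤ) (v₂ : Fin k₂ → Fin n → ℤ)
    (h₁ : ∀ x ∈ polyCone (ratGen v₁), r 0 x)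
    (h₂ : ∀ x ∈ polyCone (ratGen v₂), r 0 x)
    (γ₁ γ₂ : Fin n → ℝ) :
    ∃ (γ₃ : Fin n → ℝ) (k₃ : ℕ) (v₃ : Fin k₃ → Fin n → ℤ),
      (∀ x ∈ polyCone (ratGen v₃), r 0 x) ∧
      ((γ₁ + ·) '' polyCone (ratGen v₁)) ∪ ((γ₂ + ·) '' polyCone (ratGen v₂)) ⊆
        (γ₃ + ·) '' polyCone (ratGen v₃) := by
  have hσ₃ : polyCone (ratGen (Fin.append (Fin.append v₁ v₂) (stdGen n))) =
      polyCone (ratGen v₁) + polyCone (ratGen v₂) + {x | 0 ≤ x} := by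
    rw [ratGen_append, ratGen_append, polyCone_append, polyCone_append, polyCone_ratGen_stdGen]
  refine ⟨γ₁ ⊓ γ₂, _, Fin.append (Fin.append v₁ v₂) (stdGen n), ?_, ?_⟩
  · rw [hσ₃]
    rintro _ ⟨_, ⟨a, ha, b, hb, rfl⟩, c, hc, rfl⟩
    exact nonneg_add_of_translation_invariant htrans hadd
      (nonneg_add_of_translation_invariant htrans hadd (h₁ a ha) (h₂ b hb)) (hpos c hc)
  · rw [hσ₃]
    exact union_image_add_subset_image_add (zero_mem_polyCone _) (zero_mem_polyCone _)
      (sub_nonneg.2 (inf_le_left : γ₁ ⊓ γ₂ ≤ γ₁)) (sub_nonneg.2 (inf_le_right : γ₁ ⊓ γ₂ ≤ γ₂))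

/-- For a positive total order `r` compatible with the group structure, the union of two
translated `r`-nonnegative rational polyhedral cones is contained in a translated
`r`-nonnegative rational polyhedral cone. -/
theorem union_translated_nonneg_cones {n : ℕ}
    (r : (Fin n → ℝ) → (Fin n → ℝ) → Prop)
    (htot : ∀ a b, r a b ∨ r b a)
    (htrans : ∀ a b c, r a b → r b c → r a c)
    (hadd : ∀ a b c, r a b → r (a + c) (b + c))
    (hanti : ∀ a b, r a b → r b a → a = b)
    (hpos : ∀ x : Fin n → ℝ, (∀ i, 0 ≤ x i) → r 0 x)
    {k₁ k₂ : ℕ} (v₁ : Fin k₁ → Fin n → ℤ) (v₂ : Fin k₂ → Fin n → ℤ)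
    (h₁ : ∀ x ∈ polyCone (ratGen v₁), r 0 x)
    (h₂ : ∀ x ∈ polyCone (ratGen v₂), r 0 x)
    (γ₁ γ₂ : Fin n → ℝ) :
    ∃ (γ₃ : Fin n → ℝ) (k₃ : ℕ) (v₃ : Fin k₃ → Fin n → ℤ),
      (∀ x ∈ polyCone (ratGen v₃), r 0 x) ∧
      ((γ₁ + ·) '' polyCone (ratGen v₁)) ∪ ((γ₂ + ·) '' polyCone (ratGen v₂)) ⊆
        (γ₃ + ·) '' polyCone (ratGen v₃) :=
  union_translated_nonneg_cones_general r htrans hadd hpos v₁ v₂ h₁ h₂ γ₁ γ₂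
end

section
/- Let ⪯ be a total order on ℝⁿ compatible with the additive group structure and let σ be a ⪯-nonnegative rational polyhedral cone. Then the set σ ∩ ℤⁿ, with the order induced by ⪯, is well ordered. -/
/-!
A lattice point `α = ∑ λᵢ vᵢ` of the cone splits as `∑ ⌊λᵢ⌋ vᵢ + f` with the remainder `f` in a
fixed finite box. Raising the integer coefficients coordinatewise adds a point of the cone, which
is `⪯`-nonnegative, so it can only increase `α`. By Dickson's lemma on `ℕᵏ` (remainders compared
by equality) every sequence of lattice points of the cone therefore has `xᵢ ⪯ xⱼ` for some
`i < j`, and for a total preorder this forces every nonempty set to have a minimum.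
-/

open Matrix

/-- The canonical embedding `ℤⁿ → ℝⁿ`. -/
def intCast' {n : ℕ} (α : Fin n → ℤ) : Fin n → ℝ := fun i => (α i : ℝ)

open Finset

theorem abs_sum_mul_le_sum_abs {ι : Type*} (s : Finset ι) {c : ι → ℝ}
    (hc : ∀ i ∈ s, c i ∈ Set.Icc 0 1) (a : ι → ℝ) : |∑ i ∈ s, c i * a i| ≤ ∑ i ∈ s, |a i| :=
  (abs_sum_le_sum_abs _ _).trans <| sum_le_sum fun i hi => by
    rw [abs_mul, abs_of_nonneg (hc i hi).1]
    exact mul_le_of_le_one_left (abs_nonneg _) (hc i hi).2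

theorem Set.PartiallyWellOrderedOn.exists_forall_rel {α : Type*} {r : α → α → Prop} {s : Set α}
    (hs : s.PartiallyWellOrderedOn r) (htot : ∀ a b, r a b ∨ r b a)
    (htrans : ∀ a b c, r a b → r b c → r a c) (hne : s.Nonempty) : ∃ m ∈ s, ∀ a ∈ s, r m a := by
  have : IsPreorder α r := { refl a := (htot a a).elim id id, trans := htrans }
  obtain ⟨a₀, ha₀⟩ := hne
  obtain ⟨⟨m, hm⟩, -, hmin⟩ := hs.wellFoundedOn.has_min Set.univ ⟨⟨a₀, ha₀⟩, trivial⟩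
  exact ⟨m, hm, fun a ha => (htot m a).elim id fun ham =>
    Classical.byContradiction fun hma => hmin ⟨a, ha⟩ trivial ⟨ham, hma⟩⟩

section LatticePoints

variable {n k : ℕ}

theorem intCast'_sum_nsmul_add (v : Fin k → Fin n → ℤ) (m : Fin k → ℕ) (f : Fin n → ℤ) :
    intCast' (∑ i, m i • v i + f) = ∑ i, m i • ratGen v i + intCast' f := by
  ext j
  simp [intCast', ratGen, Finset.sum_apply]

theorem sum_nsmul_mem_polyCone (u : Fin k → Fin n → ℝ) (m : Fin k → ℕ) :
    ∑ i, m i • u i ∈ polyCone u :=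
  ⟨fun i => m i, fun i => Nat.cast_nonneg _, by simp [Nat.cast_smul_eq_nsmul]⟩

theorem rel_sum_nsmul_add_of_le {r : (Fin n → ℝ) → (Fin n → ℝ) → Prop}
    (hadd : ∀ a b c, r a b → r (a + c) (b + c)) {v : Fin k → Fin n → ℤ}
    (hnn : ∀ x ∈ polyCone (ratGen v), r 0 x) {m m' : Fin k → ℕ} (h : m ≤ m') (f : Fin n → ℤ) :
    r (intCast' (∑ i, m i • v i + f)) (intCast' (∑ i, m' i • v i + f)) := by
  have hsplit : intCast' (∑ i, m' i • v i + f) =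
      ∑ i, (m' - m) i • ratGen v i + intCast' (∑ i, m i • v i + f) := by
    simp only [intCast'_sum_nsmul_add, ← add_assoc, ← sum_add_distrib, ← add_smul]
    simp [Nat.sub_add_cancel (h _)]
  rw [hsplit]
  simpa using hadd 0 _ (intCast' (∑ i, m i • v i + f)) (hnn _ (sum_nsmul_mem_polyCone _ _))

def boxBound (v : Fin k → Fin n → ℤ) : Fin n → ℤ := fun j => ∑ i, |v i j|

theorem exists_eq_sum_nsmul_add_mem_Icc {v : Fin k → Fin n → ℤ} {α : Fin n → ℤ}
    (hα : intCast' α ∈ polyCone (ratGen v)) :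
    ∃ m : Fin k → ℕ, ∃ f ∈ Set.Icc (-boxBound v) (boxBound v), α = ∑ i, m i • v i + f := by
  obtain ⟨c, hc, hαc⟩ := hα
  set f := α - ∑ i, ⌊c i⌋₊ • v i
  refine ⟨fun i => ⌊c i⌋₊, f, ?_, by simp [f]⟩
  suffices hf : ∀ j, |f j| ≤ boxBound v j from
    ⟨fun j => (abs_le.1 (hf j)).1, fun j => (abs_le.1 (hf j)).2⟩
  intro j
  have hfj : (f j : ℝ) = ∑ i, (c i - ⌊c i⌋₊) * (v i j : ℝ) := by
    have := congrFun hαc j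
    simp only [intCast', ratGen, Finset.sum_apply, Pi.smul_apply, smul_eq_mul] at this
    simp [f, Finset.sum_apply, this, sub_mul]
  have hfrac : ∀ i ∈ univ, c i - ⌊c i⌋₊ ∈ Set.Icc (0 : ℝ) 1 := fun i _ =>
    ⟨sub_nonneg.2 (Nat.floor_le (hc i)), by linarith [Nat.lt_floor_add_one (c i)]⟩
  exact_mod_cast hfj ▸ abs_sum_mul_le_sum_abs univ hfrac _

theorem partiallyWellOrderedOn_lattice_points {r : (Fin n → ℝ) → (Fin n → ℝ) → Prop}
    (hadd : ∀ a b c, r a b → r (a + c) (b + c)) {v : Fin k → Fin n → ℤ}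
    (hnn : ∀ x ∈ polyCone (ratGen v), r 0 x) :
    {α : Fin n → ℤ | intCast' α ∈ polyCone (ratGen v)}.PartiallyWellOrderedOn
      fun a b => r (intCast' a) (intCast' b) := by
  have hbox : (Set.univ ×ˢ Set.Icc (-boxBound v) (boxBound v)).PartiallyWellOrderedOn
      fun p q : (Fin k → ℕ) × (Fin n → ℤ) => p.1 ≤ q.1 ∧ p.2 = q.2 :=
    Set.PartiallyWellOrderedOn.prod (Set.isPWO_of_wellQuasiOrderedLE _)
      (Set.finite_Icc _ _).partiallyWellOrderedOn
  refine (hbox.image_of_monotone_on (f := fun p => ∑ i, p.1 i • v i + p.2) ?_).mono ?_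
  · rintro ⟨m, f⟩ - ⟨m', -⟩ - ⟨hle, rfl⟩
    exact rel_sum_nsmul_add_of_le hadd hnn hle f
  · intro α hα
    obtain ⟨m, f, hf, rfl⟩ := exists_eq_sum_nsmul_add_mem_Icc hα
    exact ⟨(m, f), ⟨trivial, hf⟩, rfl⟩

end LatticePoints

theorem lattice_points_of_nonneg_cone_well_ordered_general {n : ℕ}
    (r : (Fin n → ℝ) → (Fin n → ℝ) → Prop)
    (htot : ∀ a b, r a b ∨ r b a)
    (htrans : ∀ a b c, r a b → r b c → r a c)
    (hadd : ∀ a b c, r a b → r (a + c) (b + c))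
    {k : ℕ} (v : Fin k → Fin n → ℤ)
    (hnn : ∀ x ∈ polyCone (ratGen v), r 0 x)
    (T : Set (Fin n → ℤ))
    (hT : ∀ α ∈ T, intCast' α ∈ polyCone (ratGen v))
    (hne : T.Nonempty) :
    ∃ m ∈ T, ∀ α ∈ T, r (intCast' m) (intCast' α) :=
  ((partiallyWellOrderedOn_lattice_points hadd hnn).mono hT).exists_forall_rel
    (fun _ _ => htot _ _) (fun _ _ _ => htrans _ _ _) hne

/-- For a total order `r` on `ℝⁿ` compatible with the group structure and an
`r`-nonnegative rational polyhedral cone `σ`, the set `σ ∩ ℤⁿ` is well ordered by `r`: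
every nonempty subset has an `r`-minimum. -/
theorem lattice_points_of_nonneg_cone_well_ordered {n : ℕ}
    (r : (Fin n → ℝ) → (Fin n → ℝ) → Prop)
    (htot : ∀ a b, r a b ∨ r b a)
    (htrans : ∀ a b c, r a b → r b c → r a c)
    (hadd : ∀ a b c, r a b → r (a + c) (b + c))
    (hanti : ∀ a b, r a b → r b a → a = b)
    {k : ℕ} (v : Fin k → Fin n → ℤ)
    (hnn : ∀ x ∈ polyCone (ratGen v), r 0 x)
    (T : Set (Fin n → ℤ))
    (hT : ∀ α ∈ T, intCast' α ∈ polyCone (ratGen v))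
    (hne : T.Nonempty) :
    ∃ m ∈ T, ∀ α ∈ T, r (intCast' m) (intCast' α) :=
  lattice_points_of_nonneg_cone_well_ordered_general r htot htrans hadd v hnn T hT hne
end

section
/- Let u₁, u₂, …, u_n be a basis of ℝⁿ and let S ⊆ ℝⁿ. Then S is contained in the intersection, over all sign choices ε₂,…,ε_n ∈ {−1,1}, of the sets of elements that are ≥_{(u₁, ε₂u₂,…,ε_n u_n)}-nonnegative, if and only if S ⊆ {v | v·u₁ ≥ 0} and S ∩ {v | v·u₁ = 0} ⊆ {0}. -/
/-!
Nonnegativity for `≤_{(w₁,…,w_n)}` is decided by the first `wᵢ` with `s · wᵢ ≠ 0`. For the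
sign-twisted bases `(u₁, ε₂u₂, …, εₙuₙ)` every `s` with `s · u₁ > 0` therefore passes, and
`s · u₁ < 0` fails for all sign choices. If `s ≠ 0` but `s · u₁ = 0`, then since the `uᵢ` span,
some `s · uᵢ` with `i > 1` is nonzero; flipping the sign `εᵢ` of the first such `i` makes `s`
negative.
-/

open Matrix

/-- The continuous preorder `≤_{(w₁,…,w_s)}`: compare the tuples of dot products with
`w₁,…,w_s` lexicographically. -/
def lexLe {n s : ℕ} (w : Fin s → Fin n → ℝ) (a b : Fin n → ℝ) : Prop :=
  (∀ i, a ⬝ᵥ w i = b ⬝ᵥ w i) ∨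
  ∃ i, (∀ j, j < i → a ⬝ᵥ w j = b ⬝ᵥ w j) ∧ a ⬝ᵥ w i < b ⬝ᵥ w i

theorem lexLe_zero_iff_of_first_ne_zero {n s : ℕ} {w : Fin s → Fin n → ℝ} {v : Fin n → ℝ}
    {i : Fin s} (hlt : ∀ j < i, v ⬝ᵥ w j = 0) (hi : v ⬝ᵥ w i ≠ 0) :
    lexLe w 0 v ↔ 0 < v ⬝ᵥ w i := by
  simp only [lexLe, zero_dotProduct]
  constructor
  · rintro (hall | ⟨k, hk, hpos⟩)
    · exact absurd (hall i).symm hi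
    · rcases lt_trichotomy k i with hki | rfl | hik
      · exact absurd (hlt k hki) hpos.ne'
      · exact hpos
      · exact absurd (hk i hik).symm hi
  · exact fun hpos => Or.inr ⟨i, fun j hj => (hlt j hj).symm, hpos⟩

theorem lexLe_zero_of_pos_head {n s : ℕ} {w : Fin (s + 1) → Fin n → ℝ} {v : Fin n → ℝ}
    (h : 0 < v ⬝ᵥ w 0) : lexLe w 0 v :=
  (lexLe_zero_iff_of_first_ne_zero (fun j hj => absurd hj (Fin.not_lt_zero j)) h.ne').mpr h

theorem nonneg_head_of_lexLe_zero {n s : ℕ} {w : Fin (s + 1) → Fin n → ℝ} {v : Fin n → ℝ}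
    (h : lexLe w 0 v) : 0 ≤ v ⬝ᵥ w 0 := by
  by_contra! hneg
  exact hneg.not_gt
    ((lexLe_zero_iff_of_first_ne_zero (fun j hj => absurd hj (Fin.not_lt_zero j)) hneg.ne).mp h)

theorem exists_dotProduct_ne_zero_of_span_eq_top {ι : Type*} {n : Type*} [Fintype n]
    {u : ι → n → ℝ} (hsp : Submodule.span ℝ (Set.range u) = ⊤) {v : n → ℝ} (hv : v ≠ 0) :
    ∃ i, v ⬝ᵥ u i ≠ 0 := by
  by_contra! hall
  have hzero : dotProductBilin ℝ ℝ v = 0 := LinearMap.ext_on_range hsp (by simpa using hall)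
  exact hv (dotProduct_self_eq_zero.mp (by simpa using LinearMap.congr_fun hzero v))

theorem exists_first_ne_zero {s : ℕ} {f : Fin s → ℝ} (h : ∃ i, f i ≠ 0) :
    ∃ i, f i ≠ 0 ∧ ∀ j < i, f j = 0 := by
  obtain ⟨i, hi, hmin⟩ := wellFounded_lt.has_min {i | f i ≠ 0} h
  exact ⟨i, hi, fun j hj => by_contra fun hj0 => hmin j hj0 hj⟩

theorem exists_sign_mul_neg {x : ℝ} (hx : x ≠ 0) : ∃ e : ℝ, (e = 1 ∨ e = -1) ∧ e * x < 0 := by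
  rcases hx.lt_or_gt with hneg | hpos
  · exact ⟨1, Or.inl rfl, by linarith⟩
  · exact ⟨-1, Or.inr rfl, by linarith⟩

theorem nonneg_for_all_sign_choices_iff_general {n : ℕ} (u : Fin (n + 1) → (Fin (n + 1) → ℝ))
    (hsp : Submodule.span ℝ (Set.range u) = ⊤)
    (S : Set (Fin (n + 1) → ℝ)) :
    (∀ ε : Fin (n + 1) → ℝ, ε 0 = 1 → (∀ i, ε i = 1 ∨ ε i = -1) →
        ∀ s ∈ S, lexLe (fun i => ε i • u i) 0 s) ↔
      ((∀ s ∈ S, 0 ≤ s ⬝ᵥ u 0) ∧ ∀ s ∈ S, s ⬝ᵥ u 0 = 0 → s = 0) := by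
  constructor
  · intro H
    refine ⟨fun s hs => by simpa using nonneg_head_of_lexLe_zero (H 1 rfl (fun _ => .inl rfl) s hs),
      fun s hs hs0 => by_contra fun hne => ?_⟩
    obtain ⟨i, hi, hlt⟩ := exists_first_ne_zero (exists_dotProduct_ne_zero_of_span_eq_top hsp hne)
    have hi0 : i ≠ 0 := by rintro rfl; exact hi hs0
    obtain ⟨e, he, heneg⟩ := exists_sign_mul_neg hi
    let ε : Fin (n + 1) → ℝ := Function.update 1 i e
    have hεu : ∀ j, s ⬝ᵥ (ε j • u j) = ε j * s ⬝ᵥ u j := fun j => dotProduct_smul _ _ _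
    have hεi : ε i = e := Function.update_self ..
    have hnonneg := H ε (by simp [ε, hi0.symm])
      (fun j => by by_cases hj : j = i <;> simp [ε, hj, he]) s hs
    have hεi_ne : s ⬝ᵥ (ε i • u i) ≠ 0 := by rw [hεu, hεi]; exact heneg.ne
    rw [lexLe_zero_iff_of_first_ne_zero (fun j hj => by rw [hεu, hlt j hj, mul_zero]) hεi_ne,
      hεu, hεi] at hnonneg
    exact heneg.not_gt hnonneg
  · rintro ⟨hnonneg, hzero⟩ ε hε0 - s hs
    rcases (hnonneg s hs).eq_or_lt with heq | hpos
    · rw [hzero s hs heq.symm]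
      exact Or.inl fun _ => rfl
    · exact lexLe_zero_of_pos_head (by simpa [dotProduct_smul, hε0] using hpos)

/-- For a basis `u 0, …, u n` of `ℝ^(n+1)` and a set `S`: `S` consists of
nonnegative elements for all the lexicographic preorders `≤_{(u₁,ε₂u₂,…,ε_nu_n)}`
over all sign choices `εᵢ ∈ {-1,1}` iff `S` lies in the half-space `{v | v·u₁ ≥ 0}`
and `S ∩ u₁^⊥ ⊆ {0}`. -/
theorem nonneg_for_all_sign_choices_iff {n : ℕ} (u : Fin (n + 1) → (Fin (n + 1) → ℝ))
    (hli : LinearIndependent ℝ u)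
    (hsp : Submodule.span ℝ (Set.range u) = ⊤)
    (S : Set (Fin (n + 1) → ℝ)) :
    (∀ ε : Fin (n + 1) → ℝ, ε 0 = 1 → (∀ i, ε i = 1 ∨ ε i = -1) →
        ∀ s ∈ S, lexLe (fun i => ε i • u i) 0 s) ↔
      ((∀ s ∈ S, 0 ≤ s ⬝ᵥ u 0) ∧ ∀ s ∈ S, s ⬝ᵥ u 0 = 0 → s = 0) :=
  nonneg_for_all_sign_choices_iff_general u hsp S
end

section
/- Let ω ∈ ℝⁿ be nonzero, let σ ⊆ ℝⁿ be a strongly convex polyhedral cone, and let u₂,…,u_n be such that ω, u₂,…,u_n form a basis of ℝⁿ. Then the following are equivalent: (i) σ is ≤_{(ω, ε₂u₂,…,ε_n u_n)}-nonnegative for all sign choices εᵢ ∈ {−1,1}; (ii) σ is ⪯-nonnegative for every continuous preorder ⪯ refining ≤_ω; (iii) ω lies in the relative interior of the dual cone σ^∨. -/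
open Matrix

/-- The dual cone of a set in `ℝⁿ`. -/
def dualCone {n : ℕ} (S : Set (Fin n → ℝ)) : Set (Fin n → ℝ) :=
  {v | ∀ u ∈ S, 0 ≤ v ⬝ᵥ u}

/-! Both (i) and (ii) are equivalent to `ω` being strictly positive on `σ \ {0}`, which for a
finitely generated cone is the same as `ω` lying in the interior of `σ^∨`. A lexicographic
preorder is total, so if it refines `≤_ω` it must put `0` below every `x` with `ω ⬝ᵥ x > 0`.
Conversely, if `x ≠ 0` lies in `σ` with `ω ⬝ᵥ x ≤ 0`, choosing the signs `εᵢ` so that every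
`x ⬝ᵥ εᵢ uᵢ` is `≤ 0` makes `x` lexicographically negative, since `x` cannot be orthogonal to
the whole basis. -/

open Filter Topology

section Lex

variable {n s : ℕ}

lemma lexLe_refl (w : Fin s → Fin n → ℝ) (a : Fin n → ℝ) : lexLe w a a :=
  Or.inl fun _ => rfl

lemma lexLe_total (w : Fin s → Fin n → ℝ) (a b : Fin n → ℝ) :
    lexLe w a b ∨ lexLe w b a := by
  by_cases h : ∀ i, a ⬝ᵥ w i = b ⬝ᵥ w i
  · exact Or.inl (Or.inl h)
  obtain ⟨i, hi, hmin⟩ := wellFounded_lt.has_min {i | a ⬝ᵥ w i ≠ b ⬝ᵥ w i} (not_forall.1 h)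
  have heq : ∀ j, j < i → a ⬝ᵥ w j = b ⬝ᵥ w j := fun j hj => not_not.1 fun hne => hmin j hne hj
  rcases lt_or_gt_of_ne hi with hlt | hgt
  · exact Or.inl (Or.inr ⟨i, heq, hlt⟩)
  · exact Or.inr (Or.inr ⟨i, fun j hj => (heq j hj).symm, hgt⟩)

lemma lexLe_of_dotProduct_lt {ω a b : Fin n → ℝ} {w : Fin s → Fin n → ℝ}
    (hw : ∀ a b, lexLe w a b → ω ⬝ᵥ a ≤ ω ⬝ᵥ b) (h : ω ⬝ᵥ a < ω ⬝ᵥ b) : lexLe w a b :=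
  (lexLe_total w a b).resolve_right fun hba => (hw b a hba).not_gt h

lemma dotProduct_le_of_lexLe {w : Fin (s + 1) → Fin n → ℝ} {a b : Fin n → ℝ}
    (h : lexLe w a b) : a ⬝ᵥ w 0 ≤ b ⬝ᵥ w 0 := by
  rcases h with heq | ⟨i, hbefore, hlt⟩
  · exact (heq 0).le
  · rcases eq_or_ne i 0 with rfl | hi
    · exact hlt.le
    · exact (hbefore 0 (Fin.pos_of_ne_zero hi)).le

lemma dotProduct_eq_zero_of_lexLe_zero {w : Fin s → Fin n → ℝ} {x : Fin n → ℝ}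
    (hnonpos : ∀ i, x ⬝ᵥ w i ≤ 0) (h : lexLe w 0 x) (i : Fin s) : x ⬝ᵥ w i = 0 := by
  rcases h with heq | ⟨j, -, hlt⟩
  · simpa using (heq i).symm
  · exact absurd (hnonpos j) (by simpa using hlt)

end Lex

lemma eq_zero_of_forall_dotProduct_eq_zero {m ι : Type*} [Fintype m] {u : ι → m → ℝ}
    (hsp : Submodule.span ℝ (Set.range u) = ⊤) {x : m → ℝ} (h : ∀ i, x ⬝ᵥ u i = 0) :
    x = 0 := by
  have hx : dotProductBilin ℝ ℝ x = 0 := LinearMap.ext_on_range hsp (by simpa using h)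
  exact dotProduct_self_eq_zero.1 (LinearMap.congr_fun hx x)

lemma dotProduct_pos_of_mem_interior_dualCone {n : ℕ} {S : Set (Fin n → ℝ)} {ω x : Fin n → ℝ}
    (hω : ω ∈ interior (dualCone S)) (hx : x ∈ S) (hx0 : x ≠ 0) : 0 < ω ⬝ᵥ x := by
  have hnhds : ∀ᶠ t in 𝓝 (0 : ℝ), ω - t • x ∈ dualCone S := by
    have hc : Continuous fun t : ℝ => ω - t • x := by fun_prop
    exact hc.continuousAt.preimage_mem_nhds (by simpa using mem_interior_iff_mem_nhds.1 hω)
  obtain ⟨t, hmem, ht⟩ := ((hnhds.filter_mono nhdsWithin_le_nhds).and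
    (self_mem_nhdsWithin : Set.Ioi (0 : ℝ) ∈ 𝓝[>] 0)).exists
  have hxx : 0 < x ⬝ᵥ x := dotProduct_self_star_pos_iff.2 hx0
  have hdual := hmem x hx
  rw [sub_dotProduct, smul_dotProduct, smul_eq_mul, sub_nonneg] at hdual
  exact (mul_pos ht hxx).trans_le hdual

section PolyCone

variable {n k : ℕ} (g : Fin k → Fin n → ℝ)

lemma mem_polyCone (i : Fin k) : g i ∈ polyCone g := by
  classical
  refine ⟨Pi.single i 1, fun j => ?_, ?_⟩
  · rcases eq_or_ne j i with rfl | hj <;> simp [*]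
  · simp [Pi.single_apply]

lemma mem_dualCone_polyCone {v : Fin n → ℝ} (hv : ∀ i, 0 ≤ v ⬝ᵥ g i) :
    v ∈ dualCone (polyCone g) := by
  rintro x ⟨lam, hlam, rfl⟩
  rw [dotProduct_sum]
  exact Finset.sum_nonneg fun i _ => by
    rw [dotProduct_smul, smul_eq_mul]; exact mul_nonneg (hlam i) (hv i)

lemma mem_interior_dualCone_polyCone {ω : Fin n → ℝ}
    (h : ∀ x ∈ polyCone g, x ≠ 0 → 0 < ω ⬝ᵥ x) : ω ∈ interior (dualCone (polyCone g)) := by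
  let U : Set (Fin n → ℝ) := ⋂ i, {v | g i ≠ 0 → 0 < v ⬝ᵥ g i}
  have hU : IsOpen U := isOpen_iInter_of_finite fun i => by
    by_cases hgi : g i = 0
    · simp [hgi]
    · simpa [hgi] using isOpen_lt continuous_const (by fun_prop : Continuous (· ⬝ᵥ g i))
  have hUsub : U ⊆ dualCone (polyCone g) := fun v hv =>
    mem_dualCone_polyCone g fun i => by
      by_cases hgi : g i = 0
      · simp [hgi]
      · exact (Set.mem_iInter.1 hv i hgi).le
  exact mem_interior.2 ⟨U, hUsub, hU, Set.mem_iInter.2 fun i => h (g i) (mem_polyCone g i)⟩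

end PolyCone

noncomputable def negatingSigns {n m : ℕ} (x : Fin n → ℝ) (u : Fin m → Fin n → ℝ) (j : Fin m) :
    ℝ :=
  if 0 < x ⬝ᵥ u j then -1 else 1

lemma negatingSigns_eq_one_or_neg_one {n m : ℕ} (x : Fin n → ℝ) (u : Fin m → Fin n → ℝ)
    (j : Fin m) : negatingSigns x u j = 1 ∨ negatingSigns x u j = -1 := by
  unfold negatingSigns; split_ifs <;> simp

lemma dotProduct_negatingSigns_smul {n m : ℕ} (x : Fin n → ℝ) (u : Fin m → Fin n → ℝ)
    (j : Fin m) : x ⬝ᵥ (negatingSigns x u j • u j) = -|x ⬝ᵥ u j| := by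
  unfold negatingSigns
  split_ifs with h
  · simp [abs_of_pos h]
  · simp [abs_of_nonpos (not_lt.1 h)]

lemma dotProduct_pos_of_forall_signs {n m k : ℕ} {ω : Fin n → ℝ}
    {g : Fin k → Fin n → ℝ} {u : Fin (m + 1) → Fin n → ℝ} (hu0 : u 0 = ω)
    (hsp : Submodule.span ℝ (Set.range u) = ⊤)
    (hsigns : ∀ ε : Fin (m + 1) → ℝ, ε 0 = 1 → (∀ i, ε i = 1 ∨ ε i = -1) →
      ∀ x ∈ polyCone g, lexLe (fun i => ε i • u i) 0 x)
    {x : Fin n → ℝ} (hx : x ∈ polyCone g) (hx0 : x ≠ 0) : 0 < ω ⬝ᵥ x := by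
  by_contra! hle
  have hε0 : negatingSigns x u 0 = 1 := by
    rw [negatingSigns, if_neg (by rwa [hu0, dotProduct_comm, not_lt])]
  have hlex := hsigns _ hε0 (negatingSigns_eq_one_or_neg_one x u) x hx
  refine hx0 (eq_zero_of_forall_dotProduct_eq_zero hsp fun i => abs_eq_zero.1 (neg_eq_zero.1 ?_))
  rw [← dotProduct_negatingSigns_smul]
  refine dotProduct_eq_zero_of_lexLe_zero (fun j => ?_) hlex i
  rw [dotProduct_negatingSigns_smul]
  exact neg_nonpos.2 (abs_nonneg _)

theorem nonneg_tfae_interior_dual_general {n k : ℕ} (ω : Fin (n + 1) → ℝ)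
    (g : Fin k → (Fin (n + 1) → ℝ))
    (u : Fin (n + 1) → (Fin (n + 1) → ℝ)) (hu0 : u 0 = ω)
    (hsp : Submodule.span ℝ (Set.range u) = ⊤) :
    ((∀ ε : Fin (n + 1) → ℝ, ε 0 = 1 → (∀ i, ε i = 1 ∨ ε i = -1) →
        ∀ x ∈ polyCone g, lexLe (fun i => ε i • u i) 0 x) ↔
      ω ∈ interior (dualCone (polyCone g))) ∧
    ((∀ (s : ℕ) (w : Fin s → Fin (n + 1) → ℝ),
        (∀ a b, lexLe w a b → ω ⬝ᵥ a ≤ ω ⬝ᵥ b) →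
        ∀ x ∈ polyCone g, lexLe w 0 x) ↔
      ω ∈ interior (dualCone (polyCone g))) := by
  have h32 : ω ∈ interior (dualCone (polyCone g)) → ∀ (s : ℕ) (w : Fin s → Fin (n + 1) → ℝ),
      (∀ a b, lexLe w a b → ω ⬝ᵥ a ≤ ω ⬝ᵥ b) → ∀ x ∈ polyCone g, lexLe w 0 x := by
    intro hω s w hw x hx
    rcases eq_or_ne x 0 with rfl | hx0
    · exact lexLe_refl w 0
    · exact lexLe_of_dotProduct_lt hw
        (by simpa using dotProduct_pos_of_mem_interior_dualCone hω hx hx0)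
  have h21 : (∀ (s : ℕ) (w : Fin s → Fin (n + 1) → ℝ),
      (∀ a b, lexLe w a b → ω ⬝ᵥ a ≤ ω ⬝ᵥ b) → ∀ x ∈ polyCone g, lexLe w 0 x) →
      ∀ ε : Fin (n + 1) → ℝ, ε 0 = 1 → (∀ i, ε i = 1 ∨ ε i = -1) →
        ∀ x ∈ polyCone g, lexLe (fun i => ε i • u i) 0 x := by
    refine fun h2 ε hε0 _ => h2 _ _ fun a b hab => ?_
    simpa [hε0, hu0, dotProduct_comm] using dotProduct_le_of_lexLe hab
  have h13 := fun h1 => mem_interior_dualCone_polyCone g fun x hx hx0 =>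
    dotProduct_pos_of_forall_signs hu0 hsp h1 hx hx0
  exact ⟨⟨h13, fun h => h21 (h32 h)⟩, ⟨fun h => h13 (h21 h), h32⟩⟩

/-- For `ω ≠ 0`, a strongly convex polyhedral cone `σ`, and `u` a basis of `ℝⁿ` with
`u 0 = ω`, the following are equivalent: (i) `σ` is `≤_{(ω,ε₂u₂,…,ε_nu_n)}`-nonnegative
for all sign choices; (ii) `σ` is `⪯`-nonnegative for every continuous preorder `⪯`
refining `≤_ω`; (iii) `ω` lies in the (relative) interior of the dual cone `σ^∨`
(which is the interior since `σ^∨` is full dimensional). Stated as (i) ↔ (iii) and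
(ii) ↔ (iii). -/
theorem nonneg_tfae_interior_dual {n k : ℕ} (ω : Fin (n + 1) → ℝ) (hω : ω ≠ 0)
    (g : Fin k → (Fin (n + 1) → ℝ))
    (hsc : ∀ x ∈ polyCone g, -x ∈ polyCone g → x = 0)
    (u : Fin (n + 1) → (Fin (n + 1) → ℝ)) (hu0 : u 0 = ω)
    (hli : LinearIndependent ℝ u)
    (hsp : Submodule.span ℝ (Set.range u) = ⊤) :
    ((∀ ε : Fin (n + 1) → ℝ, ε 0 = 1 → (∀ i, ε i = 1 ∨ ε i = -1) →
        ∀ x ∈ polyCone g, lexLe (fun i => ε i • u i) 0 x) ↔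
      ω ∈ interior (dualCone (polyCone g))) ∧
    ((∀ (s : ℕ) (w : Fin s → Fin (n + 1) → ℝ),
        (∀ a b, lexLe w a b → ω ⬝ᵥ a ≤ ω ⬝ᵥ b) →
        ∀ x ∈ polyCone g, lexLe w 0 x) ↔
      ω ∈ interior (dualCone (polyCone g))) :=
  nonneg_tfae_interior_dual_general ω g u hu0 hsp
end

section
/- Let K be a field, σ a strongly convex rational polyhedral cone containing the first orthant, and ⪯ a positive continuous total order on ℝⁿ such that σ is ⪯-nonnegative. Let ξ be a formal Laurent series (a function ℤⁿ → K) with support contained in γ + σ for some γ ∈ ℤⁿ, and let ω ∈ σ^∨. Then the set {α·ω | α ∈ Supp(ξ)} has a minimum (when ξ ≠ 0). -/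
/-! Taking integer parts of the coefficients, every lattice point of `σ` is an `ℕ`-combination of
the generators `v i` plus a lattice point of the bounded zonotope `{∑ tᵢ vᵢ | 0 ≤ tᵢ ≤ 1}`, so the
lattice points of `σ` form a finitely generated monoid (Gordan's lemma). As `ω ≥ 0` on `σ`, the
values `α ⬝ᵥ ω` on this monoid lie in the additive monoid generated by finitely many nonnegative
reals, which is well ordered; hence they attain a minimum on `Supp ξ ⊆ γ + σ`. -/

open Matrix

section LatticePoints

variable {n k : ℕ}

lemma intCast'_sub (a b : Fin n → ℤ) : intCast' (a - b) = intCast' a - intCast' b := by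
  funext j
  simp [intCast']

lemma intCast'_sum_nsmul (m : Fin k → ℕ) (v : Fin k → Fin n → ℤ) :
    intCast' (∑ i, m i • v i) = ∑ i, (m i : ℝ) • ratGen v i := by
  funext j
  simp [intCast', ratGen, Finset.sum_apply]

variable (v : Fin k → Fin n → ℤ)

lemma ratGen_mem_polyCone (i : Fin k) : ratGen v i ∈ polyCone (ratGen v) :=
  ⟨Pi.single i 1, fun j => by by_cases h : j = i <;> simp [h], by simp [Pi.single_apply, ite_smul]⟩

def zonotopeLatticePoints : Set (Fin n → ℤ) :=
  {p | ∃ t : Fin k → ℝ, (∀ i, 0 ≤ t i ∧ t i ≤ 1) ∧ intCast' p = ∑ i, t i • ratGen v i}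

lemma zonotopeLatticePoints_subset_polyCone {p : Fin n → ℤ} (hp : p ∈ zonotopeLatticePoints v) :
    intCast' p ∈ polyCone (ratGen v) := by
  obtain ⟨t, ht, hp⟩ := hp
  exact ⟨t, fun i => (ht i).1, hp⟩

lemma zonotopeLatticePoints_finite : (zonotopeLatticePoints v).Finite := by
  let M : Fin n → ℤ := fun j => ∑ i, |v i j|
  refine (Set.finite_Icc (-M) M).subset fun p ⟨t, ht, hp⟩ => ?_
  have hbound : ∀ j, |p j| ≤ M j := fun j => by
    have hpj : (p j : ℝ) = ∑ i, t i * v i j := by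
      simpa [intCast', ratGen, Finset.sum_apply] using congrFun hp j
    have : |(p j : ℝ)| ≤ ∑ i, |(v i j : ℝ)| := by
      rw [hpj]
      refine (Finset.abs_sum_le_sum_abs _ _).trans (Finset.sum_le_sum fun i _ => ?_)
      rw [abs_mul, abs_of_nonneg (ht i).1]
      exact mul_le_of_le_one_left (abs_nonneg _) (ht i).2
    exact_mod_cast this
  exact ⟨fun j => neg_le_of_abs_le (hbound j), fun j => le_of_abs_le (hbound j)⟩

lemma exists_sub_sum_nsmul_mem_zonotopeLatticePoints {α : Fin n → ℤ}
    (hα : intCast' α ∈ polyCone (ratGen v)) :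
    ∃ m : Fin k → ℕ, α - ∑ i, m i • v i ∈ zonotopeLatticePoints v := by
  obtain ⟨lam, hlam, hα⟩ := hα
  refine ⟨fun i => ⌊lam i⌋₊, fun i => lam i - ⌊lam i⌋₊, fun i => ⟨?_, ?_⟩, ?_⟩
  · exact sub_nonneg.mpr (Nat.floor_le (hlam i))
  · linarith [Nat.lt_floor_add_one (lam i)]
  · simp only [intCast'_sub, intCast'_sum_nsmul, hα, sub_smul, Finset.sum_sub_distrib]

theorem exists_finite_latticePoints_polyCone_subset_closure :
    ∃ G : Set (Fin n → ℤ), G.Finite ∧ (∀ g ∈ G, intCast' g ∈ polyCone (ratGen v)) ∧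
      ∀ α, intCast' α ∈ polyCone (ratGen v) → α ∈ AddSubmonoid.closure G := by
  refine ⟨Set.range v ∪ zonotopeLatticePoints v,
    (Set.finite_range v).union (zonotopeLatticePoints_finite v), ?_, fun α hα => ?_⟩
  · rintro g (⟨i, rfl⟩ | hg)
    · exact ratGen_mem_polyCone v i
    · exact zonotopeLatticePoints_subset_polyCone v hg
  · obtain ⟨m, hm⟩ := exists_sub_sum_nsmul_mem_zonotopeLatticePoints v hα
    have hsum : (∑ i, m i • v i) ∈
        AddSubmonoid.closure (Set.range v ∪ zonotopeLatticePoints v) := by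
      refine sum_mem fun i _ => nsmul_mem ?_ _
      exact AddSubmonoid.mem_closure_of_mem (Or.inl ⟨i, rfl⟩)
    have hrest : α - ∑ i, m i • v i ∈
        AddSubmonoid.closure (Set.range v ∪ zonotopeLatticePoints v) :=
      AddSubmonoid.mem_closure_of_mem (Or.inr hm)
    simpa using add_mem hrest hsum

theorem isPWO_dotProduct_latticePoints_polyCone {ω : Fin n → ℝ}
    (hω : ω ∈ dualCone (polyCone (ratGen v))) :
    {t : ℝ | ∃ α, intCast' α ∈ polyCone (ratGen v) ∧ t = intCast' α ⬝ᵥ ω}.IsPWO := by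
  obtain ⟨G, hGfin, hGcone, hGgen⟩ := exists_finite_latticePoints_polyCone_subset_closure v
  let f : (Fin n → ℤ) →+ ℝ := AddMonoidHom.mk' (fun α => intCast' α ⬝ᵥ ω) fun a b => by
    rw [← add_dotProduct]
    congr 1
    funext j
    simp [intCast']
  have hnonneg : ∀ t ∈ f '' G, 0 ≤ t := by
    rintro _ ⟨g, hg, rfl⟩
    show 0 ≤ intCast' g ⬝ᵥ ω
    rw [dotProduct_comm]
    exact hω _ (hGcone g hg)
  refine ((hGfin.image f).isPWO.addSubmonoid_closure hnonneg).mono ?_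
  rintro _ ⟨α, hα, rfl⟩
  rw [← AddMonoidHom.map_mclosure]
  exact ⟨α, hGgen α hα, rfl⟩

end LatticePoints

theorem min_of_omega_on_support_general {n : ℕ} (K : Type*) [Field K]
    {k : ℕ} (v : Fin k → Fin n → ℤ)
    (ξ : (Fin n → ℤ) → K) (γ : Fin n → ℤ)
    (hsupp : ∀ α, ξ α ≠ 0 → intCast' (α - γ) ∈ polyCone (ratGen v))
    (ω : Fin n → ℝ) (hω : ω ∈ dualCone (polyCone (ratGen v)))
    (hξ : ξ ≠ 0) :
    ∃ β, ξ β ≠ 0 ∧ ∀ α, ξ α ≠ 0 → intCast' β ⬝ᵥ ω ≤ intCast' α ⬝ᵥ ω := by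
  obtain ⟨α₀, hα₀⟩ := Function.ne_iff.mp hξ
  let T := {t : ℝ | ∃ α, ξ α ≠ 0 ∧ t = intCast' (α - γ) ⬝ᵥ ω}
  have hT : T.IsWF := (isPWO_dotProduct_latticePoints_polyCone v hω).isWF.mono <| by
    rintro _ ⟨α, hα, rfl⟩
    exact ⟨α - γ, hsupp α hα, rfl⟩
  have hne : T.Nonempty := ⟨_, α₀, hα₀, rfl⟩
  obtain ⟨β, hβ, hβmin⟩ := hT.min_mem hne
  refine ⟨β, hβ, fun α hα => ?_⟩
  have := hT.min_le hne ⟨α, hα, rfl⟩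
  rw [hβmin, intCast'_sub, intCast'_sub, sub_dotProduct, sub_dotProduct] at this
  linarith

/-- Let `σ` be a strongly convex rational cone containing the first orthant which is
nonnegative for a positive continuous total order `r`. For a nonzero Laurent series `ξ`
(a function `ℤⁿ → K`) with support in `γ + σ` and `ω ∈ σ^∨`, the set
`{α·ω | α ∈ Supp ξ}` attains a minimum. -/
theorem min_of_omega_on_support {n : ℕ} (K : Type*) [Field K]
    (r : (Fin n → ℝ) → (Fin n → ℝ) → Prop)
    (htot : ∀ a b, r a b ∨ r b a)
    (htrans : ∀ a b c, r a b → r b c → r a c)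
    (hadd : ∀ a b c, r a b → r (a + c) (b + c))
    (hanti : ∀ a b, r a b → r b a → a = b)
    (hpos : ∀ x : Fin n → ℝ, (∀ i, 0 ≤ x i) → r 0 x)
    (hcont : ∃ (s : ℕ) (w : Fin s → Fin n → ℝ), ∀ a b, r a b ↔ lexLe w a b)
    {k : ℕ} (v : Fin k → Fin n → ℤ)
    (hsc : ∀ x ∈ polyCone (ratGen v), -x ∈ polyCone (ratGen v) → x = 0)
    (horth : ∀ x : Fin n → ℝ, (∀ i, 0 ≤ x i) → x ∈ polyCone (ratGen v))
    (hnn : ∀ x ∈ polyCone (ratGen v), r 0 x)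
    (ξ : (Fin n → ℤ) → K) (γ : Fin n → ℤ)
    (hsupp : ∀ α, ξ α ≠ 0 → intCast' (α - γ) ∈ polyCone (ratGen v))
    (ω : Fin n → ℝ) (hω : ω ∈ dualCone (polyCone (ratGen v)))
    (hξ : ξ ≠ 0) :
    ∃ β, ξ β ≠ 0 ∧ ∀ α, ξ α ≠ 0 → intCast' β ⬝ᵥ ω ≤ intCast' α ⬝ᵥ ω :=
  min_of_omega_on_support_general K v ξ γ hsupp ω hω hξ
end

section
/- Let F(T) = Σ_{m≥0} a_m T^m be a formal power series over a field K that satisfies a nonzero polynomial recurrence Q₀(m)a_m + Q₁(m+1)a_{m+1} + ⋯ + Q_N(m+N)a_{m+N} = 0 for all m ≥ 0, with polynomials Q₀,…,Q_N ∈ K[m], Q_N not identically zero. If F is not a polynomial, then the gaps between consecutive nonzero coefficients of F are bounded: there exists a constant C such that for every m with a_m ≠ 0, there exists m' with m < m' ≤ m + C and a_{m'} ≠ 0. -/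
/-!
The leading polynomial `Q_N` has finitely many roots, so `Q_N(k) ≠ 0` for all `k > r`. Beyond `r`
the recurrence at `k - N` expresses `Q_N(k) a_k` through `a_{k-N}, …, a_{k-1}`, so `N` consecutive
zero coefficients past `r` force every later coefficient to vanish. A series that is not a
polynomial therefore has a nonzero coefficient in every window of length `N + r`.
-/

open Polynomial

theorem Polynomial.exists_forall_lt_eval_natCast_ne_zero {R : Type*} [CommRing R] [IsDomain R]
    [CharZero R] {p : R[X]} (hp : p ≠ 0) : ∃ r : ℕ, ∀ n : ℕ, r < n → p.eval (n : R) ≠ 0 := by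
  obtain ⟨r, hr⟩ := ((finite_setOfPred_isRoot hp).preimage Nat.cast_injective.injOn).bddAbove
  exact ⟨r, fun n hrn hn => hrn.not_ge (hr hn)⟩

def SatisfiesPolyRecurrence {R : Type*} [Semiring R] {N : ℕ} (Q : Fin (N + 1) → R[X])
    (a : ℕ → R) : Prop :=
  ∀ m : ℕ, ∑ i : Fin (N + 1), (Q i).eval ((m + (i : ℕ) : ℕ) : R) * a (m + (i : ℕ)) = 0

namespace SatisfiesPolyRecurrence

variable {R : Type*} [Semiring R] {N : ℕ} {Q : Fin (N + 1) → R[X]} {a : ℕ → R}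

theorem eval_last_mul_eq_zero (hrec : SatisfiesPolyRecurrence Q a) {n : ℕ}
    (hzero : ∀ i < N, a (n + i) = 0) : (Q (Fin.last N)).eval ((n + N : ℕ) : R) * a (n + N) = 0 := by
  have h := hrec n
  rwa [Fin.sum_univ_castSucc, Finset.sum_eq_zero fun i _ => by simp [hzero i i.isLt],
    zero_add] at h

theorem eq_zero_of_window_eq_zero [NoZeroDivisors R] (hrec : SatisfiesPolyRecurrence Q a) {m : ℕ}
    (hQ : ∀ k, m + N < k → (Q (Fin.last N)).eval (k : R) ≠ 0)
    (hwindow : ∀ k, m < k → k ≤ m + N → a k = 0) : ∀ k, m < k → a k = 0 := by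
  intro k hmk
  induction k using Nat.strong_induction_on with
  | _ k ih =>
    rcases le_or_gt k (m + N) with hk | hk
    · exact hwindow k hmk hk
    · have hlast := hrec.eval_last_mul_eq_zero (n := k - N) fun i hi => ih _ (by omega) (by omega)
      rw [Nat.sub_add_cancel (by omega)] at hlast
      exact (mul_eq_zero.mp hlast).resolve_left (hQ k hk)

end SatisfiesPolyRecurrence

/-- A power series over a characteristic zero field whose coefficients satisfy a nonzero
polynomial recurrence (P-recursive/D-finite) and which is not a polynomial has bounded
gaps between consecutive nonzero coefficients. -/
theorem gaps_of_P_recursive_bounded (K : Type*) [Field K] [CharZero K]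
    (a : ℕ → K) (N : ℕ) (Q : Fin (N + 1) → Polynomial K)
    (hQN : Q (Fin.last N) ≠ 0)
    (hrec : ∀ m : ℕ,
      ∑ i : Fin (N + 1), (Q i).eval ((m + (i : ℕ) : ℕ) : K) * a (m + (i : ℕ)) = 0)
    (hnp : ∀ M : ℕ, ∃ m, M < m ∧ a m ≠ 0) :
    ∃ C : ℕ, ∀ m, a m ≠ 0 → ∃ m', m < m' ∧ m' ≤ m + C ∧ a m' ≠ 0 := by
  obtain ⟨r, hr⟩ := exists_forall_lt_eval_natCast_ne_zero hQN
  refine ⟨N + r, fun m _ => ?_⟩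
  by_contra! hgap
  have htail : ∀ k, m + r < k → a k = 0 :=
    SatisfiesPolyRecurrence.eq_zero_of_window_eq_zero (m := m + r) hrec
      (fun k hk => hr k (by omega)) fun k hk hkN => hgap k (by omega) (by omega)
  obtain ⟨k, hk, hak⟩ := hnp (m + r)
  exact hak (htail k hk)
end

section
/- Let ω ∈ Int(σ^∨) where σ ⊆ ℝⁿ is a strongly convex polyhedral cone, and let γ ∈ ℝⁿ. Then for every real number l, the set {u ∈ (γ + σ) ∩ ℤⁿ | u·ω ≤ l} is finite. -/
open Matrix

/-! Testing `ω` against the perturbations `ω ± (ε / 2) eᵢ`, which stay in the dual cone, gives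
`(ε / 2) |xᵢ| ≤ ω ⬝ᵥ x` on `σ`; so `ω ⬝ᵥ ·` dominates a multiple of the sup norm on `σ`, the slab is
bounded, and a bounded set contains only finitely many lattice points. -/

section

variable {n : ℕ}

lemma mul_le_dotProduct_of_ball_subset_dualCone {S : Set (Fin n → ℝ)} {ω x : Fin n → ℝ}
    {ε : ℝ} (hball : Metric.ball ω ε ⊆ dualCone S) (hx : x ∈ S) (i : Fin n) {t : ℝ}
    (ht : |t| < ε) : t * x i ≤ ω ⬝ᵥ x := by
  have hmem : ω - t • Pi.single i 1 ∈ Metric.ball ω ε := by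
    simpa [dist_eq_norm, norm_smul, Pi.norm_single] using ht
  have := hball hmem x hx
  simp only [sub_dotProduct, smul_dotProduct, single_one_dotProduct, smul_eq_mul] at this
  linarith

lemma exists_pos_mul_norm_le_dotProduct {S : Set (Fin n → ℝ)} {ω : Fin n → ℝ}
    (hω : ω ∈ interior (dualCone S)) : ∃ c > 0, ∀ x ∈ S, c * ‖x‖ ≤ ω ⬝ᵥ x := by
  obtain ⟨ε, hε, hball⟩ := Metric.mem_nhds_iff.1 (mem_interior_iff_mem_nhds.1 hω)
  have hε2 : |ε / 2| < ε := by rw [abs_of_pos (by positivity)]; linarith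
  refine ⟨ε / 2, by positivity, fun x hx => ?_⟩
  have hcoord (i : Fin n) : ε / 2 * |x i| ≤ ω ⬝ᵥ x := by
    have hpos := mul_le_dotProduct_of_ball_subset_dualCone hball hx i hε2
    have hneg := mul_le_dotProduct_of_ball_subset_dualCone hball hx i (t := -(ε / 2))
      (by rwa [abs_neg])
    rcases abs_cases (x i) with ⟨h, -⟩ | ⟨h, -⟩ <;> rw [h] <;> linarith
  have hnonneg : 0 ≤ ω ⬝ᵥ x := hball (Metric.mem_ball_self hε) x hx
  rw [← le_div_iff₀' (by positivity)]
  refine (pi_norm_le_iff_of_nonneg (by positivity)).2 fun i => ?_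
  rw [Real.norm_eq_abs, le_div_iff₀' (by positivity)]
  exact hcoord i

lemma isBounded_image_add_inter_dotProduct_le {S : Set (Fin n → ℝ)} {ω : Fin n → ℝ}
    (hω : ω ∈ interior (dualCone S)) (γ : Fin n → ℝ) (l : ℝ) :
    Bornology.IsBounded {x | x ∈ (γ + ·) '' S ∧ x ⬝ᵥ ω ≤ l} := by
  obtain ⟨c, hc, hcS⟩ := exists_pos_mul_norm_le_dotProduct hω
  refine (Metric.isBounded_closedBall (x := γ) (r := (l - ω ⬝ᵥ γ) / c)).subset ?_
  rintro _ ⟨⟨y, hy, rfl⟩, hl⟩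
  rw [Metric.mem_closedBall, dist_eq_norm, add_sub_cancel_left, le_div_iff₀' hc]
  rw [dotProduct_comm, dotProduct_add] at hl
  linarith [hcS y hy]

lemma finite_setOf_intCast'_mem {s : Set (Fin n → ℝ)} (hs : Bornology.IsBounded s) :
    {α : Fin n → ℤ | intCast' α ∈ s}.Finite :=
  have hcast : Isometry (intCast' (n := n)) := .piMap _ fun _ => Real.isometry_intCast
  (Metric.isCompact_of_isClosed_isBounded (isClosed_discrete _)
    (hcast.antilipschitz.isBounded_preimage hs)).finite_of_discrete

end

theorem slab_lattice_points_finite_general {n k : ℕ} (gens : Fin k → (Fin n → ℝ))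
    (ω : Fin n → ℝ) (hω : ω ∈ interior (dualCone (polyCone gens)))
    (γ : Fin n → ℝ) (l : ℝ) :
    {α : Fin n → ℤ | intCast' α ∈ (γ + ·) '' polyCone gens ∧ intCast' α ⬝ᵥ ω ≤ l}.Finite :=
  finite_setOf_intCast'_mem (isBounded_image_add_inter_dotProduct_le hω γ l)

/-- For `ω` in the interior of the dual of a strongly convex polyhedral cone `σ` and any
`γ ∈ ℝⁿ`, `l ∈ ℝ`, the slab `{u ∈ (γ + σ) ∩ ℤⁿ | u·ω ≤ l}` is finite. -/
theorem slab_lattice_points_finite {n k : ℕ} (gens : Fin k → (Fin n → ℝ))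
    (hsc : ∀ x ∈ polyCone gens, -x ∈ polyCone gens → x = 0)
    (ω : Fin n → ℝ) (hω : ω ∈ interior (dualCone (polyCone gens)))
    (γ : Fin n → ℝ) (l : ℝ) :
    {α : Fin n → ℤ | intCast' α ∈ (γ + ·) '' polyCone gens ∧ intCast' α ⬝ᵥ ω ≤ l}.Finite :=
  slab_lattice_points_finite_general gens ω hω γ l
end

section
/- Let σ₁, σ₂ ⊆ ℝⁿ be polyhedral cones containing the first orthant ℝ≥0ⁿ, and γ₁, γ₂ ∈ ℝⁿ. Then there exists γ ∈ ℝⁿ with (γ₁ + σ₁) ∩ (γ₂ + σ₂) ⊆ γ + (σ₁ ∩ σ₂). -/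
open Matrix

lemma polyCone_add_mem {n k : ℕ} {u : Fin k → (Fin n → ℝ)} {x y : Fin n → ℝ}
    (hx : x ∈ polyCone u) (hy : y ∈ polyCone u) : x + y ∈ polyCone u := by
  obtain ⟨l, hl, rfl⟩ := hx
  obtain ⟨m, hm, rfl⟩ := hy
  exact ⟨l + m, fun i => add_nonneg (hl i) (hm i), by
    simp [add_smul, Finset.sum_add_distrib]⟩

/-- For polyhedral cones `σ₁, σ₂` containing the first orthant (hence with full dimensional
intersection), any intersection of translates `(γ₁ + σ₁) ∩ (γ₂ + σ₂)` is contained in a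
translate `γ + (σ₁ ∩ σ₂)`. -/
theorem inter_translates_subset_translate_of_orthant {n k₁ k₂ : ℕ}
    (u₁ : Fin k₁ → (Fin n → ℝ)) (u₂ : Fin k₂ → (Fin n → ℝ))
    (h₁ : ∀ x : Fin n → ℝ, (∀ i, 0 ≤ x i) → x ∈ polyCone u₁)
    (h₂ : ∀ x : Fin n → ℝ, (∀ i, 0 ≤ x i) → x ∈ polyCone u₂)
    (γ₁ γ₂ : Fin n → ℝ) :
    ∃ γ : Fin n → ℝ,
      ((γ₁ + ·) '' polyCone u₁) ∩ ((γ₂ + ·) '' polyCone u₂) ⊆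
        (γ + ·) '' (polyCone u₁ ∩ polyCone u₂) := by
  refine ⟨fun i => min (γ₁ i) (γ₂ i), ?_⟩
  rintro x ⟨⟨s₁, hs₁, rfl⟩, ⟨s₂, hs₂, hx₂⟩⟩
  set γ : Fin n → ℝ := fun i => min (γ₁ i) (γ₂ i) with hγ
  have hd1 : γ₁ - γ ∈ polyCone u₁ :=
    h₁ _ (fun i => by simp [hγ, min_le_left])
  have hd2 : γ₂ - γ ∈ polyCone u₂ :=
    h₂ _ (fun i => by simp [hγ, min_le_right])
  refine ⟨(γ₁ - γ) + s₁, ⟨polyCone_add_mem hd1 hs₁, ?_⟩, by ring⟩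
  have : (γ₁ - γ) + s₁ = (γ₂ - γ) + s₂ := by
    have := hx₂
    funext i
    have := congrFun hx₂ i
    simp only [Pi.add_apply, Pi.sub_apply] at this ⊢
    linarith
  rw [this]
  exact polyCone_add_mem hd2 hs₂
end
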